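/- arXiv:1704.07927 — 5 statements merged into one kernel-verified Lean document; each statement's English description precedes it below -/
import Mathlib

section
/- Fix δ ∈ (0, 1/2) and an integer m. Let a_n, b_n, c_n ∈ ℚ with a_n ≠ 0 and c_n ≠ 0 for all n with |n − m| ≤ 3, and let y_n ∈ ℚ \ {0} for |n − m| ≤ 2 satisfy y_{n+1} + y_{n−1} = (a_n y_n² + b_n y_n + c_n)/y_n² for all n with |n − m| ≤ 1. If |y_m| < ε_m (with respect to the usual archimedean absolute value |·| on ℚ and κ = 3), then either |y_{m+1}| ≥ |y_m|^{−(2−δ)} and |y_{m+2}| ≥ ε_{m+2}, or |y_{m−1}| ≥ |y_m|^{−(2−δ)} and |y_{m−2}| ≥ ε_{m−2}. -/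
/-- The quantity `κ · max{1, |c_n|⁻¹, |b_n|, |a_n|, |c_{n+1}|, |c_{n-1}|, |b_{n+1}|, |b_{n-1}|,
|a_{n+1}|⁻¹, |a_{n-1}|⁻¹}` from the definition of the length scale `ε_n`, for an absolute
value `v` on `ℚ`. -/
noncomputable def epsBound (κ : ℝ) (v : ℚ → ℝ) (a b c : ℤ → ℚ) (n : ℤ) : ℝ :=
  κ * max 1 (max (v (c n))⁻¹ (max (v (b n)) (max (v (a n)) (max (v (c (n + 1)))
    (max (v (c (n - 1))) (max (v (b (n + 1))) (max (v (b (n - 1)))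
      (max (v (a (n + 1)))⁻¹ (v (a (n - 1)))⁻¹))))))))

/-- The length scale `ε_n`, defined by `ε_n^{-δ} = κ · max{1, |c_n|⁻¹, |b_n|, |a_n|,
|c_{n+1}|, |c_{n-1}|, |b_{n+1}|, |b_{n-1}|, |a_{n+1}|⁻¹, |a_{n-1}|⁻¹}`. -/
noncomputable def epsN (κ δ : ℝ) (v : ℚ → ℝ) (a b c : ℤ → ℚ) (n : ℤ) : ℝ :=
  (epsBound κ v a b c n) ^ (-δ⁻¹)

/-!
Put `E = |y_m|` and `M = ε_m^{-δ}`, so that `E ≤ M^{-1/δ} ≤ M^{-2}` and `E^δ ≤ 1/M`.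
In the recurrence at `m` the constant term dominates: `|c_m| ≥ 3/M` while
`|b_m| E + |a_m| E² ≤ 2/(3M)`, hence `|y_{m+1}| + |y_{m-1}| ≥ 2/(M E²) ≥ 2 E^{-(2-δ)}`,
and one neighbour, say `y_{m+1}`, has `|y_{m+1}| ≥ E^{-(2-δ)} ≥ 1/E`. As a quadratic in
`1/y_{m+1}`, the recurrence at `m+1` is then dominated by its constant term `a_{m+1}`,
so `|y_{m+2}| ≥ 2|a_{m+1}|/3 ≥ ε_{m+2}^δ ≥ ε_{m+2}`.
-/

section OrderedField

variable {K : Type*} [Field K] [LinearOrder K] [IsStrictOrderedRing K]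

theorem le_mul_abs_of_mul_abs_inv_le {k M x : K} (hx : x ≠ 0) (h : k * |x|⁻¹ ≤ M) :
    k ≤ M * |x| := by
  rwa [mul_comm, inv_mul_le_iff₀ (abs_pos.2 hx), mul_comm] at h

theorem abs_const_sub_le_abs_quadratic {M a b c s : K} (hM : 3 ≤ M) (ha : 3 * |a| ≤ M)
    (hb : 3 * |b| ≤ M) (hs : |s| * M ^ 2 ≤ 1) :
    |c| - 2 / (3 * M) ≤ |a * s ^ 2 + b * s + c| := by
  have hM0 : 0 < M := by linarith
  have hs1 : |s| ≤ 1 := by nlinarith [abs_nonneg s]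
  have small : ∀ x : K, 3 * |x| ≤ M → |x| * |s| ≤ 1 / (3 * M) := fun x hx => by
    rw [le_div_iff₀ (by positivity)]
    nlinarith [mul_nonneg hM0.le (abs_nonneg s)]
  have has : |a| * |s| ^ 2 ≤ |a| * |s| :=
    mul_le_mul_of_nonneg_left (by nlinarith [abs_nonneg s]) (abs_nonneg a)
  have htri : |c| ≤ |a * s ^ 2 + b * s + c| + |a| * |s| ^ 2 + |b| * |s| := by
    calc |c| = |(a * s ^ 2 + b * s + c) + -(a * s ^ 2) + -(b * s)| := by congr 1; ring
      _ ≤ |a * s ^ 2 + b * s + c| + |-(a * s ^ 2)| + |-(b * s)| := abs_add_three _ _ _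
      _ = _ := by rw [abs_neg, abs_neg, abs_mul, abs_mul, abs_pow]
  have htwo : 1 / (3 * M) + 1 / (3 * M) = 2 / (3 * M) := by ring
  linarith [small a ha, small b hb]

theorem two_div_le_abs_mul_sq_of_eq_quadratic_div_sq {M a b c u p : K} (hM : 3 ≤ M)
    (hc : 3 ≤ M * |c|) (hb : 3 * |b| ≤ M) (ha : 3 * |a| ≤ M) (hu0 : u ≠ 0)
    (hu : |u| * M ^ 2 ≤ 1) (h : p = (a * u ^ 2 + b * u + c) / u ^ 2) :
    2 / M ≤ |p| * |u| ^ 2 := by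
  have hM0 : 0 < M := by linarith
  have hpu : |p| * |u| ^ 2 = |a * u ^ 2 + b * u + c| := by
    rw [h, abs_div, abs_pow, div_mul_cancel₀ _ (by positivity)]
  have hc' : 3 / M ≤ |c| := by rwa [div_le_iff₀ hM0, mul_comm]
  have hmain := abs_const_sub_le_abs_quadratic (c := c) hM ha hb hu
  rw [hpu]
  have : 2 / M ≤ 3 / M - 2 / (3 * M) := by
    rw [div_sub_div _ _ hM0.ne' (by positivity), div_le_div_iff₀ hM0 (by positivity)]
    nlinarith
  linarith

theorem two_mul_abs_div_three_le_of_add_eq_quadratic_div_sq {M a b c u w z : K} (hM : 3 ≤ M)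
    (ha : 3 ≤ M * |a|) (hb : 3 * |b| ≤ M) (hc : 3 * |c| ≤ M) (hu : |u| * M ^ 2 ≤ 1)
    (huw : 1 ≤ |u| * |w|) (h : z + u = (a * w ^ 2 + b * w + c) / w ^ 2) :
    2 * |a| / 3 ≤ |z| := by
  have hM0 : 0 < M := by linarith
  have hw0 : w ≠ 0 := by rintro rfl; norm_num at huw
  have hquad : z + u = c * w⁻¹ ^ 2 + b * w⁻¹ + a := by rw [h]; field_simp; ring
  have hinv : |w⁻¹| ≤ |u| := by
    rw [abs_inv, inv_le_iff_one_le_mul₀ (abs_pos.2 hw0)]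
    linarith
  have hmain := abs_const_sub_le_abs_quadratic (c := a) hM hc hb
    (le_trans (mul_le_mul_of_nonneg_right hinv (by positivity)) hu)
  rw [← hquad] at hmain
  have hu3 : |u| ≤ 1 / (3 * M) := by
    rw [le_div_iff₀ (by positivity)]
    nlinarith [abs_nonneg u]
  have ha' : 1 / M ≤ |a| / 3 := by
    rw [div_le_div_iff₀ hM0 (by norm_num)]
    linarith
  have : 2 / (3 * M) + 1 / (3 * M) = 1 / M := by field_simp; norm_num
  linarith [abs_add_le z u]

end OrderedField

section Real

open Real

theorem rpow_neg_inv_le_inv_pow {M δ : ℝ} {k : ℕ} (hM : 1 ≤ M) (hδ0 : 0 < δ)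
    (hkδ : k * δ ≤ 1) : M ^ (-δ⁻¹) ≤ (M ^ k)⁻¹ := by
  have hk : (k : ℝ) ≤ δ⁻¹ := by rwa [← one_div, le_div_iff₀ hδ0]
  calc M ^ (-δ⁻¹) ≤ M ^ (-(k : ℝ)) := rpow_le_rpow_of_exponent_le hM (neg_le_neg hk)
    _ = (M ^ k)⁻¹ := by rw [rpow_neg (by linarith), rpow_natCast]

theorem mul_sq_le_one_of_le_rpow_neg_inv {x M δ : ℝ} (hM : 1 ≤ M) (hδ0 : 0 < δ)
    (hδ : δ ≤ 1 / 2) (hx : x ≤ M ^ (-δ⁻¹)) : x * M ^ 2 ≤ 1 := by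
  have := hx.trans (rpow_neg_inv_le_inv_pow (k := 2) hM hδ0 (by push_cast; linarith))
  rwa [← one_div, le_div_iff₀ (by positivity)] at this

theorem rpow_le_inv_of_le_rpow_neg_inv {x M δ : ℝ} (hx : 0 ≤ x) (hM : 0 < M) (hδ0 : 0 < δ)
    (h : x ≤ M ^ (-δ⁻¹)) : x ^ δ ≤ M⁻¹ :=
  calc x ^ δ ≤ (M ^ (-δ⁻¹)) ^ δ := rpow_le_rpow hx h hδ0.le
    _ = M⁻¹ := by rw [← rpow_mul hM.le, neg_mul, inv_mul_cancel₀ hδ0.ne', rpow_neg_one]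

theorem rpow_le_abs_or_rpow_le_abs_of_add_eq_quadratic_div_sq {δ M a b c u p q : ℝ}
    (hδ0 : 0 < δ) (hδ : δ ≤ 1 / 2) (hM : 3 ≤ M) (hc0 : c ≠ 0) (hc : 3 * |c|⁻¹ ≤ M)
    (hb : 3 * |b| ≤ M) (ha : 3 * |a| ≤ M) (hu0 : u ≠ 0) (hu : |u| ≤ M ^ (-δ⁻¹))
    (h : p + q = (a * u ^ 2 + b * u + c) / u ^ 2) :
    |u| ^ (-(2 - δ)) ≤ |p| ∨ |u| ^ (-(2 - δ)) ≤ |q| := by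
  have hM0 : 0 < M := by linarith
  have hu0' : 0 < |u| := abs_pos.2 hu0
  have hsum := two_div_le_abs_mul_sq_of_eq_quadratic_div_sq hM
    (le_mul_abs_of_mul_abs_inv_le hc0 hc) hb ha hu0
    (mul_sq_le_one_of_le_rpow_neg_inv (by linarith) hδ0 hδ hu) h
  have huδ := rpow_le_inv_of_le_rpow_neg_inv hu0'.le hM0 hδ0 hu
  have key : 2 * |u| ^ (-(2 - δ)) ≤ |p| + |q| :=
    calc 2 * |u| ^ (-(2 - δ)) = 2 * |u| ^ δ / |u| ^ 2 := by
          rw [neg_sub, rpow_sub hu0', rpow_two, mul_div_assoc]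
      _ ≤ 2 / M / |u| ^ 2 := by gcongr; rw [div_eq_mul_inv]; linarith
      _ ≤ |p + q| := by rwa [div_le_iff₀ (by positivity)]
      _ ≤ |p| + |q| := abs_add_le p q
  by_contra! hlt
  linarith [hlt.1, hlt.2]

theorem rpow_neg_inv_le_abs_of_add_eq_quadratic_div_sq {δ M M' a b c u w z : ℝ}
    (hδ0 : 0 < δ) (hδ : δ ≤ 1 / 2) (hM : 3 ≤ M) (hM' : 1 ≤ M') (ha0 : a ≠ 0)
    (ha : 3 * |a|⁻¹ ≤ M) (ha' : 3 * |a|⁻¹ ≤ M') (hb : 3 * |b| ≤ M) (hc : 3 * |c| ≤ M)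
    (hu0 : u ≠ 0) (hu : |u| ≤ M ^ (-δ⁻¹)) (hw : |u| ^ (-(2 - δ)) ≤ |w|)
    (h : z + u = (a * w ^ 2 + b * w + c) / w ^ 2) :
    M' ^ (-δ⁻¹) ≤ |z| := by
  have hu0' : 0 < |u| := abs_pos.2 hu0
  have hu2 := mul_sq_le_one_of_le_rpow_neg_inv (by linarith) hδ0 hδ hu
  have huw : 1 ≤ |u| * |w| := by
    rw [← inv_le_iff_one_le_mul₀' hu0', ← rpow_neg_one]
    refine le_trans (rpow_le_rpow_of_exponent_ge hu0' ?_ (by linarith)) hw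
    nlinarith
  have hz := two_mul_abs_div_three_le_of_add_eq_quadratic_div_sq hM
    (le_mul_abs_of_mul_abs_inv_le ha0 ha) hb hc hu2 huw h
  have hε := rpow_neg_inv_le_inv_pow (k := 1) hM' hδ0 (by push_cast; linarith)
  have hM'a : M'⁻¹ ≤ |a| / 3 := by
    rw [inv_le_iff_one_le_mul₀' (by linarith)]
    linarith [le_mul_abs_of_mul_abs_inv_le ha0 ha', show M' * (|a| / 3) = M' * |a| / 3 by ring]
  rw [pow_one] at hε
  linarith [abs_nonneg a]

end Real

theorem le_epsBound {κ : ℝ} (hκ : 0 ≤ κ) (v : ℚ → ℝ) (a b c : ℤ → ℚ) (n : ℤ) :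
    κ ≤ epsBound κ v a b c n ∧ κ * (v (c n))⁻¹ ≤ epsBound κ v a b c n ∧
      κ * v (b n) ≤ epsBound κ v a b c n ∧ κ * v (a n) ≤ epsBound κ v a b c n ∧
      κ * v (c (n + 1)) ≤ epsBound κ v a b c n ∧
      κ * v (c (n - 1)) ≤ epsBound κ v a b c n ∧
      κ * v (b (n + 1)) ≤ epsBound κ v a b c n ∧
      κ * v (b (n - 1)) ≤ epsBound κ v a b c n ∧
      κ * (v (a (n + 1)))⁻¹ ≤ epsBound κ v a b c n ∧
      κ * (v (a (n - 1)))⁻¹ ≤ epsBound κ v a b c n := by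
  refine ⟨le_mul_of_one_le_right hκ (le_max_left _ _), ?_, ?_, ?_, ?_, ?_, ?_, ?_, ?_, ?_⟩ <;>
    exact mul_le_mul_of_nonneg_left (by simp only [le_max_iff, le_refl, or_true, true_or]) hκ

/-- For the archimedean absolute value (with `κ = 3`): if `|y_m| < ε_m` then either
`|y_{m+1}| ≥ |y_m|^{-(2-δ)}` and `|y_{m+2}| ≥ ε_{m+2}`, or
`|y_{m-1}| ≥ |y_m|^{-(2-δ)}` and `|y_{m-2}| ≥ ε_{m-2}`. -/
theorem small_value_forces_large_neighbour_arch
    (δ : ℝ) (hδ : δ ∈ Set.Ioo (0 : ℝ) (1 / 2)) (m : ℤ) (a b c y : ℤ → ℚ)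
    (ha : ∀ n, |n - m| ≤ 3 → a n ≠ 0) (hc : ∀ n, |n - m| ≤ 3 → c n ≠ 0)
    (hy : ∀ n, |n - m| ≤ 2 → y n ≠ 0)
    (heq : ∀ n, |n - m| ≤ 1 →
      y (n + 1) + y (n - 1) = (a n * y n ^ 2 + b n * y n + c n) / y n ^ 2)
    (hsmall : |(y m : ℝ)| < epsN 3 δ (fun x => |(x : ℝ)|) a b c m) :
    (|(y (m + 1) : ℝ)| ≥ |(y m : ℝ)| ^ (-(2 - δ)) ∧
        |(y (m + 2) : ℝ)| ≥ epsN 3 δ (fun x => |(x : ℝ)|) a b c (m + 2)) ∨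
      (|(y (m - 1) : ℝ)| ≥ |(y m : ℝ)| ^ (-(2 - δ)) ∧
        |(y (m - 2) : ℝ)| ≥ epsN 3 δ (fun x => |(x : ℝ)|) a b c (m - 2)) := by
  obtain ⟨hδ0, hδ⟩ := hδ
  have hym : (y m : ℝ) ≠ 0 := Rat.cast_ne_zero.2 (hy m (by norm_num))
  have hrec : ∀ n, |n - m| ≤ 1 → (y (n + 1) : ℝ) + y (n - 1) =
      ((a n : ℝ) * y n ^ 2 + b n * y n + c n) / y n ^ 2 := fun n hn => by
    exact_mod_cast heq n hn
  have hrec_right := hrec (m + 1) (by norm_num)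
  rw [show m + 1 + 1 = m + 2 by ring, add_sub_cancel_right] at hrec_right
  have hrec_left := hrec (m - 1) (by norm_num)
  rw [sub_add_cancel, show m - 1 - 1 = m - 2 by ring, add_comm] at hrec_left
  obtain ⟨hM, hcm, hbm, ham, hcp, hcn, hbp, hbn, hap, han⟩ :=
    le_epsBound (κ := 3) (by norm_num) (fun x => |(x : ℝ)|) a b c m
  obtain ⟨hM_right, -, -, -, -, -, -, -, -, hap_right⟩ :=
    le_epsBound (κ := 3) (by norm_num) (fun x => |(x : ℝ)|) a b c (m + 2)
  obtain ⟨hM_left, -, -, -, -, -, -, -, han_left, -⟩ :=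
    le_epsBound (κ := 3) (by norm_num) (fun x => |(x : ℝ)|) a b c (m - 2)
  rw [show m + 2 - 1 = m + 1 by ring] at hap_right
  rw [show m - 2 + 1 = m - 1 by ring] at han_left
  rcases rpow_le_abs_or_rpow_le_abs_of_add_eq_quadratic_div_sq hδ0 hδ.le hM
      (Rat.cast_ne_zero.2 (hc m (by norm_num))) hcm hbm ham hym hsmall.le (hrec m (by norm_num))
    with hlarge | hlarge
  · exact Or.inl ⟨hlarge, rpow_neg_inv_le_abs_of_add_eq_quadratic_div_sq hδ0 hδ.le hM
      (by linarith) (Rat.cast_ne_zero.2 (ha _ (by norm_num))) hap hap_right hbp hcp hym hsmall.le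
      hlarge hrec_right⟩
  · exact Or.inr ⟨hlarge, rpow_neg_inv_le_abs_of_add_eq_quadratic_div_sq hδ0 hδ.le hM
      (by linarith) (Rat.cast_ne_zero.2 (ha _ (by norm_num))) han han_left hbn hcn hym hsmall.le
      hlarge hrec_left⟩
end

section
/- Fix a prime number p, δ ∈ (0, 1/2), and an integer m. Let a_n, b_n, c_n ∈ ℚ with a_n ≠ 0 and c_n ≠ 0 for all n with |n − m| ≤ 3, and let y_n ∈ ℚ \ {0} for |n − m| ≤ 2 satisfy y_{n+1} + y_{n−1} = (a_n y_n² + b_n y_n + c_n)/y_n² for all n with |n − m| ≤ 1. If |y_m|_p < ε_m (with respect to the p-adic absolute value |·|_p on ℚ and κ = 1), then either |y_{m+1}|_p ≥ |y_m|_p^{−(2−δ)} and |y_{m+2}|_p ≥ ε_{m+2}, or |y_{m−1}|_p ≥ |y_m|_p^{−(2−δ)} and |y_{m−2}|_p ≥ ε_{m−2}. -/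
/-!
If `|y_m| < ε_m`, then in `(a y_m² + b y_m + c)/y_m²` the constant term `c_m` dominates, so by the
strong triangle inequality `|y_{m+1} + y_{m-1}| = |c_m| / |y_m|²` is huge and one of the two
neighbours, say `y_{m+1}`, is at least `|y_m|^{-(2-δ)}`. In the next step of the recurrence,
`y_{m+2} = a_{m+1} + b_{m+1}/y_{m+1} + c_{m+1}/y_{m+1}² - y_m`, the leading coefficient now
dominates, so `|y_{m+2}| = |a_{m+1}|`, which is at least `ε_{m+2}` because `|a_{m+1}|⁻¹` enters
the bound defining `ε_{m+2}`. Every comparison reduces to `M · |y_m|^e < |y_m|^δ` for `e ≥ 2δ`,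
where `M = ε_m^{-δ}`.
-/

open Real

lemma mul_rpow_lt_rpow_of_mul_rpow_lt_one {M t δ e : ℝ} (ht0 : 0 < t) (ht1 : t ≤ 1)
    (hM : M * t ^ δ < 1) (he : 2 * δ ≤ e) : M * t ^ e < t ^ δ :=
  calc M * t ^ e = M * t ^ δ * t ^ (e - δ) := by rw [mul_assoc, ← rpow_add ht0, add_sub_cancel]
    _ < t ^ (e - δ) := mul_lt_of_lt_one_left (rpow_pos_of_pos ht0 _) hM
    _ ≤ t ^ δ := rpow_le_rpow_of_exponent_ge ht0 ht1 (by linarith)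

lemma lt_of_inv_le_of_mul_lt_one {M ρ x : ℝ} (hx : 0 < x) (hxM : x⁻¹ ≤ M) (hM : M * ρ < 1) :
    ρ < x := by
  have hM0 : 0 < M := (inv_pos.2 hx).trans_le hxM
  calc ρ < 1 / M := (lt_div_iff₀' hM0).2 hM
    _ = M⁻¹ := one_div M
    _ ≤ x := (inv_le_comm₀ hx hM0).1 hxM

lemma mul_rpow_lt_one_of_lt_rpow_neg_inv {M t δ : ℝ} (hM : 0 < M) (ht : 0 ≤ t) (hδ : 0 < δ)
    (h : t < M ^ (-δ⁻¹)) : M * t ^ δ < 1 :=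
  calc M * t ^ δ < M * (M ^ (-δ⁻¹)) ^ δ := by gcongr
    _ = 1 := by
      rw [← rpow_mul hM.le, neg_mul, inv_mul_cancel₀ hδ.ne', rpow_neg_one, mul_inv_cancel₀ hM.ne']

lemma rpow_neg_inv_le_of_inv_le {M x δ : ℝ} (hδ0 : 0 < δ) (hδ1 : δ ≤ 1) (hM : 1 ≤ M)
    (hx : 0 < x) (hxM : x⁻¹ ≤ M) : M ^ (-δ⁻¹) ≤ x :=
  calc M ^ (-δ⁻¹) ≤ M ^ (-1 : ℝ) :=
        rpow_le_rpow_of_exponent_le hM (neg_le_neg ((one_le_inv₀ hδ0).2 hδ1))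
    _ = M⁻¹ := rpow_neg_one M
    _ ≤ x := (inv_le_comm₀ hx (by linarith)).1 hxM

section Ultrametric

variable {K : Type*} [Field K] {v : AbsoluteValue K ℝ}

lemma rpow_neg_two_sub_le_abv_div_sq (hv : IsNonarchimedean v) {δ M : ℝ} (hδ : δ ≤ 1 / 2)
    {a b c y : K} (hy : y ≠ 0) (hy1 : v y ≤ 1) (hsmall : M * v y ^ δ < 1) (ha : v a ≤ M)
    (hb : v b ≤ M) (hc : c ≠ 0) (hcM : (v c)⁻¹ ≤ M) :
    v y ^ (-(2 - δ)) ≤ v ((a * y ^ 2 + b * y + c) / y ^ 2) := by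
  have hy0 : 0 < v y := v.pos hy
  have hc_dom : v y ^ δ < v c := lt_of_inv_le_of_mul_lt_one (v.pos hc) hcM hsmall
  have hquad : v (a * y ^ 2) < v c :=
    calc v (a * y ^ 2) = v a * v y ^ (2 : ℝ) := by rw [map_mul, map_pow, rpow_two]
      _ ≤ M * v y ^ (2 : ℝ) := by gcongr
      _ < v c := (mul_rpow_lt_rpow_of_mul_rpow_lt_one hy0 hy1 hsmall (by linarith)).trans hc_dom
  have hlin : v (b * y) < v c :=
    calc v (b * y) = v b * v y ^ (1 : ℝ) := by rw [map_mul, rpow_one]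
      _ ≤ M * v y ^ (1 : ℝ) := by gcongr
      _ < v c := (mul_rpow_lt_rpow_of_mul_rpow_lt_one hy0 hy1 hsmall (by linarith)).trans hc_dom
  have hnum : v (a * y ^ 2 + b * y + c) = v c :=
    hv.add_eq_right_of_lt ((hv _ _).trans_lt (max_lt hquad hlin))
  calc v y ^ (-(2 - δ)) = v y ^ δ / v y ^ 2 := by rw [neg_sub, rpow_sub hy0, rpow_two]
    _ ≤ v ((a * y ^ 2 + b * y + c) / y ^ 2) := by
      rw [map_div₀, hnum, map_pow]
      gcongr

lemma abv_eq_of_rpow_neg_two_sub_le (hv : IsNonarchimedean v) {δ M : ℝ} (hδ : δ ≤ 2 / 3)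
    {a b c y₀ y₁ y₂ : K} (hy₀ : y₀ ≠ 0) (hy₀1 : v y₀ ≤ 1) (hsmall : M * v y₀ ^ δ < 1)
    (hy₁ : y₁ ≠ 0) (hlarge : v y₀ ^ (-(2 - δ)) ≤ v y₁) (ha : a ≠ 0) (haM : (v a)⁻¹ ≤ M)
    (hb : v b ≤ M) (hc : v c ≤ M) (hrec : y₂ + y₀ = (a * y₁ ^ 2 + b * y₁ + c) / y₁ ^ 2) :
    v y₂ = v a := by
  have hy0 : 0 < v y₀ := v.pos hy₀
  have ha_dom : v y₀ ^ δ < v a := lt_of_inv_le_of_mul_lt_one (v.pos ha) haM hsmall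
  have hM : 0 ≤ M := (v.nonneg b).trans hb
  have hinv : (v y₁)⁻¹ ≤ v y₀ ^ (2 - δ) := by
    have := inv_anti₀ (rpow_pos_of_pos hy0 _) hlarge
    rwa [rpow_neg hy0.le, inv_inv] at this
  have hlin : v (b / y₁) ≤ v y₀ ^ δ :=
    calc v (b / y₁) = v b * (v y₁)⁻¹ := by rw [map_div₀, div_eq_mul_inv]
      _ ≤ M * v y₀ ^ (2 - δ) := by gcongr
      _ ≤ v y₀ ^ δ := (mul_rpow_lt_rpow_of_mul_rpow_lt_one hy0 hy₀1 hsmall (by linarith)).le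
  have hconst : v (c / y₁ ^ 2) ≤ v y₀ ^ δ :=
    calc v (c / y₁ ^ 2) = v c * ((v y₁)⁻¹) ^ 2 := by
          rw [map_div₀, map_pow, div_eq_mul_inv, inv_pow]
      _ ≤ M * (v y₀ ^ (2 - δ)) ^ 2 := by gcongr
      _ = M * v y₀ ^ ((2 - δ) * 2) := by rw [← rpow_mul_natCast hy0.le, Nat.cast_ofNat]
      _ ≤ v y₀ ^ δ := (mul_rpow_lt_rpow_of_mul_rpow_lt_one hy0 hy₀1 hsmall (by linarith)).le
  have hprev : v (-y₀) ≤ v y₀ ^ δ := by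
    simpa [map_neg_eq_map] using rpow_le_rpow_of_exponent_ge hy0 hy₀1 (by linarith : δ ≤ 1)
  have htail : v (b / y₁ + c / y₁ ^ 2 + -y₀) < v a :=
    ((hv _ _).trans (max_le ((hv _ _).trans (max_le hlin hconst)) hprev)).trans_lt ha_dom
  have hy₂ : y₂ = a + (b / y₁ + c / y₁ ^ 2 + -y₀) := by
    rw [eq_sub_of_add_eq hrec]
    field_simp
    ring
  rw [hy₂, hv.add_eq_left_of_lt htail]

end Ultrametric

theorem small_value_forces_large_neighbour (v : AbsoluteValue ℚ ℝ) (hv : IsNonarchimedean v)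
    {δ : ℝ} (hδ : δ ∈ Set.Ioo (0 : ℝ) (1 / 2)) {m : ℤ} {a b c y : ℤ → ℚ}
    (ha : ∀ n, |n - m| ≤ 3 → a n ≠ 0) (hc : ∀ n, |n - m| ≤ 3 → c n ≠ 0)
    (hy : ∀ n, |n - m| ≤ 2 → y n ≠ 0)
    (heq : ∀ n, |n - m| ≤ 1 →
      y (n + 1) + y (n - 1) = (a n * y n ^ 2 + b n * y n + c n) / y n ^ 2)
    (hsmall : v (y m) < epsN 1 δ v a b c m) :
    (v (y (m + 1)) ≥ v (y m) ^ (-(2 - δ)) ∧ v (y (m + 2)) ≥ epsN 1 δ v a b c (m + 2)) ∨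
      (v (y (m - 1)) ≥ v (y m) ^ (-(2 - δ)) ∧ v (y (m - 2)) ≥ epsN 1 δ v a b c (m - 2)) := by
  obtain ⟨hδ0, hδ1⟩ := hδ
  have hM1 : 1 ≤ epsBound 1 v a b c m := by simp [epsBound]
  have hym1 : v (y m) ≤ 1 :=
    hsmall.le.trans (rpow_le_one_of_one_le_of_nonpos hM1 (by simp [hδ0.le]))
  have hρ := mul_rpow_lt_one_of_lt_rpow_neg_inv (by linarith) (v.nonneg _) hδ0 hsmall
  have hym := hy m (by simp)
  have hsum := rpow_neg_two_sub_le_abv_div_sq hv (a := a m) (b := b m) hδ1.le hym hym1 hρ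
    (by simp [epsBound]) (by simp [epsBound]) (hc m (by simp)) (by simp [epsBound])
  rw [← heq m (by simp)] at hsum
  rcases le_max_iff.1 (hsum.trans (hv _ _)) with hnext | hprev
  · refine .inl ⟨hnext, ?_⟩
    have hrec := heq (m + 1) (by simp)
    rw [add_assoc, one_add_one_eq_two, add_sub_cancel_right] at hrec
    have ha₁ := ha (m + 1) (by simp)
    rw [ge_iff_le, abv_eq_of_rpow_neg_two_sub_le hv (b := b (m + 1)) (c := c (m + 1))
      (by linarith) hym hym1 hρ (hy _ (by simp)) hnext ha₁ (by simp [epsBound])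
      (by simp [epsBound]) (by simp [epsBound]) hrec]
    refine rpow_neg_inv_le_of_inv_le hδ0 (by linarith) (by simp [epsBound]) (v.pos ha₁) ?_
    rw [show m + 1 = m + 2 - 1 by ring]
    simp [epsBound]
  · refine .inr ⟨hprev, ?_⟩
    have hrec := heq (m - 1) (by simp)
    rw [sub_add_cancel, sub_sub, one_add_one_eq_two, add_comm (y m)] at hrec
    have ha₁ := ha (m - 1) (by simp)
    rw [ge_iff_le, abv_eq_of_rpow_neg_two_sub_le hv (b := b (m - 1)) (c := c (m - 1))
      (by linarith) hym hym1 hρ (hy _ (by simp)) hprev ha₁ (by simp [epsBound])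
      (by simp [epsBound]) (by simp [epsBound]) hrec]
    refine rpow_neg_inv_le_of_inv_le hδ0 (by linarith) (by simp [epsBound]) (v.pos ha₁) ?_
    rw [show m - 1 = m - 2 + 1 by ring]
    simp [epsBound]

/-- For the `p`-adic absolute value (with `κ = 1`): if `|y_m|_p < ε_m` then either
`|y_{m+1}|_p ≥ |y_m|_p^{-(2-δ)}` and `|y_{m+2}|_p ≥ ε_{m+2}`, or
`|y_{m-1}|_p ≥ |y_m|_p^{-(2-δ)}` and `|y_{m-2}|_p ≥ ε_{m-2}`. -/
theorem small_value_forces_large_neighbour_padic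
    (p : ℕ) (hp : p.Prime)
    (δ : ℝ) (hδ : δ ∈ Set.Ioo (0 : ℝ) (1 / 2)) (m : ℤ) (a b c y : ℤ → ℚ)
    (ha : ∀ n, |n - m| ≤ 3 → a n ≠ 0) (hc : ∀ n, |n - m| ≤ 3 → c n ≠ 0)
    (hy : ∀ n, |n - m| ≤ 2 → y n ≠ 0)
    (heq : ∀ n, |n - m| ≤ 1 →
      y (n + 1) + y (n - 1) = (a n * y n ^ 2 + b n * y n + c n) / y n ^ 2)
    (hsmall : ((padicNorm p (y m) : ℚ) : ℝ) <
      epsN 1 δ (fun x => ((padicNorm p x : ℚ) : ℝ)) a b c m) :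
    (((padicNorm p (y (m + 1)) : ℚ) : ℝ) ≥ ((padicNorm p (y m) : ℚ) : ℝ) ^ (-(2 - δ)) ∧
        ((padicNorm p (y (m + 2)) : ℚ) : ℝ) ≥
          epsN 1 δ (fun x => ((padicNorm p x : ℚ) : ℝ)) a b c (m + 2)) ∨
      (((padicNorm p (y (m - 1)) : ℚ) : ℝ) ≥ ((padicNorm p (y m) : ℚ) : ℝ) ^ (-(2 - δ)) ∧
        ((padicNorm p (y (m - 2)) : ℚ) : ℝ) ≥
          epsN 1 δ (fun x => ((padicNorm p x : ℚ) : ℝ)) a b c (m - 2)) := by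
  have : Fact p.Prime := ⟨hp⟩
  have hv : IsNonarchimedean (Rat.AbsoluteValue.padic p) := fun x y ↦ by
    simp only [Rat.AbsoluteValue.padic_eq_padicNorm]
    exact_mod_cast padicNorm.nonarchimedean
  exact small_value_forces_large_neighbour _ hv hδ ha hc hy heq hsmall
end

section
/- Fix κ ∈ ℂ and complex numbers a_j, b_j, c_j, a_{j+1}, b_{j+1}, c_{j+1}, a_{j+2}, b_{j+2}, c_{j+2} with c_j ≠ 0. For ε ∈ ℂ \ {0} define, whenever the denominators are nonzero, y_{j+1}(ε) = (a_j ε² + b_j ε + c_j)/ε² − κ, y_{j+2}(ε) = (a_{j+1} y_{j+1}(ε)² + b_{j+1} y_{j+1}(ε) + c_{j+1})/y_{j+1}(ε)² − ε, and y_{j+3}(ε) = (a_{j+2} y_{j+2}(ε)² + b_{j+2} y_{j+2}(ε) + c_{j+2})/y_{j+2}(ε)² − y_{j+1}(ε). Then y_{j+1}(ε) and y_{j+2}(ε) are nonzero for all sufficiently small ε ≠ 0, so y_{j+3}(ε) is well defined there, and y_{j+3}(ε) converges to a finite limit in ℂ as ε → 0 if and only if a_{j+1} = 0, c_{j+2}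 = c_j, and b_{j+2} − 2b_{j+1} + b_j = 0. -/
open Filter Topology

/-!
Write `P(ε) = ε² y_{j+1}(ε) = c_j + b_j ε + (a_j - κ) ε²`, so `y_{j+1}` has a double pole at `0`
with `P(0) = c_j ≠ 0`.

If `a_{j+1} ≠ 0`, then `y_{j+2} → a_{j+1} ≠ 0`, so if `y_{j+3}` converged, so would
`y_{j+1} = rhs(y_{j+2}) - y_{j+3}`, which is absurd.

If `a_{j+1} = 0`, then `y_{j+2} = ε w(ε)` with `w` analytic and `w(0) = -1`, and
`ε² y_{j+3} = F(ε) := a_{j+2} ε² + b_{j+2} ε / w + c_{j+2} / w² - P` is analytic at `0`.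
Then `F / ε²` has a limit iff `F(0) = F'(0) = 0`, and a derivative computation gives
`F(0) = c_{j+2} - c_j` and `F'(0) = 2 b_{j+1} c_{j+2} / c_j - b_{j+2} - b_j`.
-/

section DivSq

variable {𝕜 : Type*} [NontriviallyNormedField 𝕜] {E : Type*} [NormedAddCommGroup E]
  [NormedSpace 𝕜 E]

theorem AnalyticAt.iterate_dslope {f : 𝕜 → E} {z : 𝕜} (hf : AnalyticAt 𝕜 f z) (n : ℕ) :
    AnalyticAt 𝕜 ((Function.swap dslope z)^[n] f) z :=
  let ⟨_, hp⟩ := hf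
  ⟨_, hp.has_fpower_series_iterate_dslope_fslope n⟩

theorem AnalyticAt.exists_tendsto_inv_sq_smul_iff {f : 𝕜 → E} (hf : AnalyticAt 𝕜 f 0) :
    (∃ L, Tendsto (fun ε => (ε ^ 2)⁻¹ • f ε) (𝓝[≠] 0) (𝓝 L)) ↔ f 0 = 0 ∧ deriv f 0 = 0 := by
  have hε : Tendsto (fun ε : 𝕜 => ε) (𝓝[≠] 0) (𝓝 0) := nhdsWithin_le_nhds
  have hlim : ∀ n, Tendsto ((Function.swap dslope 0)^[n] f) (𝓝[≠] 0)
      (𝓝 ((Function.swap dslope 0)^[n] f 0)) := fun n =>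
    (hf.iterate_dslope n).continuousAt.tendsto.mono_left nhdsWithin_le_nhds
  constructor
  · rintro ⟨L, hL⟩
    have hf0 : f 0 = 0 := by
      refine tendsto_nhds_unique (hlim 0) ?_
      simpa using ((hε.pow 2).smul hL).congr' (eventually_nhdsWithin_of_forall fun ε hε => by
        simp [smul_smul, pow_ne_zero 2 (show ε ≠ 0 from hε)])
    refine ⟨hf0, ?_⟩
    rw [← dslope_same]
    refine tendsto_nhds_unique (hlim 1) ?_
    simpa using (hε.smul hL).congr' (eventually_nhdsWithin_of_forall fun ε hε => by
      have hε : ε ≠ 0 := hε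
      simp [dslope_of_ne _ hε, slope, hf0, smul_smul]
      field_simp)
  · rintro ⟨hf0, hf1⟩
    refine ⟨_, (hlim 2).congr' (eventually_nhdsWithin_of_forall fun ε hε => ?_)⟩
    dsimp only
    rw [← pow_sub_smul_iterate_dslope_of_zero (f := f) (a := 0) 2 _ ε, sub_zero,
      inv_smul_smul₀ (pow_ne_zero 2 hε)]
    intro k hk
    interval_cases k
    · exact hf0
    · simpa [dslope_same] using hf1

end DivSq

namespace SingularityConfinement

noncomputable def rhs (a b c y : ℂ) : ℂ := (a * y ^ 2 + b * y + c) / y ^ 2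

/-- `ε² y_{j+1}(ε)`, with `p = a_j - κ`. -/
def scaledY1 (cj bj p ε : ℂ) : ℂ := cj + bj * ε + p * ε ^ 2

/-- `y_{j+2}(ε) / ε` when `a_{j+1} = 0`. -/
noncomputable def scaledY2 (cj bj p bj1 cj1 ε : ℂ) : ℂ :=
  -1 + bj1 * ε / scaledY1 cj bj p ε + cj1 * ε ^ 3 / scaledY1 cj bj p ε ^ 2

/-- `ε² y_{j+3}(ε)` when `a_{j+1} = 0`. -/
noncomputable def scaledY3 (cj bj p bj1 cj1 aj2 bj2 cj2 ε : ℂ) : ℂ :=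
  aj2 * ε ^ 2 + bj2 * ε / scaledY2 cj bj p bj1 cj1 ε + cj2 / scaledY2 cj bj p bj1 cj1 ε ^ 2
    - scaledY1 cj bj p ε

variable {aj bj cj κ aj1 bj1 cj1 aj2 bj2 cj2 p a b c y ε : ℂ} {y1 y2 y3 : ℂ → ℂ}

theorem rhs_eq_add_inv (hy : y ≠ 0) : rhs a b c y = a + b * y⁻¹ + c * y⁻¹ ^ 2 := by
  simp only [rhs]
  field_simp

theorem continuousAt_rhs (hy : y ≠ 0) : ContinuousAt (rhs a b c) y := by
  unfold rhs
  fun_prop (disch := exact pow_ne_zero 2 hy)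

theorem rhs_sub_eq_scaledY1_div (hε : ε ≠ 0) :
    rhs aj bj cj ε - κ = scaledY1 cj bj (aj - κ) ε / ε ^ 2 := by
  simp only [rhs, scaledY1]
  field_simp
  ring

theorem rhs_sub_eq_mul_scaledY2 (hε : ε ≠ 0) (hP : scaledY1 cj bj p ε ≠ 0) :
    rhs 0 bj1 cj1 (scaledY1 cj bj p ε / ε ^ 2) - ε = ε * scaledY2 cj bj p bj1 cj1 ε := by
  simp only [rhs, scaledY2]
  field_simp
  ring

theorem rhs_sub_eq_scaledY3_div (hε : ε ≠ 0) (hw : scaledY2 cj bj p bj1 cj1 ε ≠ 0) :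
    rhs aj2 bj2 cj2 (ε * scaledY2 cj bj p bj1 cj1 ε) - scaledY1 cj bj p ε / ε ^ 2 =
      scaledY3 cj bj p bj1 cj1 aj2 bj2 cj2 ε / ε ^ 2 := by
  simp only [rhs, scaledY3]
  field_simp

@[simp] theorem scaledY1_zero : scaledY1 cj bj p 0 = cj := by simp [scaledY1]

@[simp] theorem scaledY2_zero : scaledY2 cj bj p bj1 cj1 0 = -1 := by simp [scaledY2]

theorem scaledY3_zero : scaledY3 cj bj p bj1 cj1 aj2 bj2 cj2 0 = cj2 - cj := by
  simp [scaledY3]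

theorem analyticAt_scaledY1 : AnalyticAt ℂ (scaledY1 cj bj p) 0 := by
  unfold scaledY1
  fun_prop

theorem analyticAt_scaledY2 (hcj : cj ≠ 0) : AnalyticAt ℂ (scaledY2 cj bj p bj1 cj1) 0 := by
  have := analyticAt_scaledY1 (cj := cj) (bj := bj) (p := p)
  unfold scaledY2
  fun_prop (disch := simpa using hcj)

theorem analyticAt_scaledY3 (hcj : cj ≠ 0) :
    AnalyticAt ℂ (scaledY3 cj bj p bj1 cj1 aj2 bj2 cj2) 0 := by
  have := analyticAt_scaledY1 (cj := cj) (bj := bj) (p := p)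
  have := analyticAt_scaledY2 (bj1 := bj1) (cj1 := cj1) (bj := bj) (p := p) hcj
  unfold scaledY3
  fun_prop (disch := simp)

theorem hasDerivAt_scaledY1 : HasDerivAt (scaledY1 cj bj p) bj 0 :=
  ((((hasDerivAt_id (0 : ℂ)).const_mul bj).const_add cj).add
    ((hasDerivAt_pow 2 (0 : ℂ)).const_mul p)).congr_deriv (by simp)

theorem hasDerivAt_scaledY2 (hcj : cj ≠ 0) :
    HasDerivAt (scaledY2 cj bj p bj1 cj1) (bj1 / cj) 0 := by
  have h1 := hasDerivAt_scaledY1 (cj := cj) (bj := bj) (p := p)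
  exact ((((hasDerivAt_id (0 : ℂ)).const_mul bj1).div h1 (by simpa using hcj)).const_add (-1)
    |>.add (((hasDerivAt_pow 3 (0 : ℂ)).const_mul cj1).div (h1.pow 2) (by simpa using hcj)))
    |>.congr_deriv (by simp; field_simp)

theorem hasDerivAt_scaledY3 (hcj : cj ≠ 0) :
    HasDerivAt (scaledY3 cj bj p bj1 cj1 aj2 bj2 cj2) (2 * bj1 * cj2 / cj - bj2 - bj) 0 := by
  have h2 := hasDerivAt_scaledY2 (bj1 := bj1) (cj1 := cj1) (bj := bj) (p := p) hcj
  have hw : scaledY2 cj bj p bj1 cj1 0 ≠ 0 := by simp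
  exact ((((hasDerivAt_pow 2 (0 : ℂ)).const_mul aj2).add
    (((hasDerivAt_id (0 : ℂ)).const_mul bj2).div h2 hw)).add
    ((hasDerivAt_const (0 : ℂ) cj2).div (h2.pow 2) (pow_ne_zero 2 hw)) |>.sub hasDerivAt_scaledY1)
    |>.congr_deriv (by simp; field_simp; ring)

theorem exists_tendsto_scaledY3_div_sq_iff (hcj : cj ≠ 0) :
    (∃ L, Tendsto (fun ε => scaledY3 cj bj p bj1 cj1 aj2 bj2 cj2 ε / ε ^ 2) (𝓝[≠] 0) (𝓝 L)) ↔
      cj2 = cj ∧ bj2 - 2 * bj1 + bj = 0 := by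
  have key := (analyticAt_scaledY3 (bj := bj) (p := p) (bj1 := bj1) (cj1 := cj1) (aj2 := aj2)
    (bj2 := bj2) (cj2 := cj2) hcj).exists_tendsto_inv_sq_smul_iff
  simp only [smul_eq_mul, inv_mul_eq_div, scaledY3_zero, (hasDerivAt_scaledY3 hcj).deriv,
    sub_eq_zero] at key
  rw [key, and_congr_right_iff]
  rintro rfl
  constructor <;> intro h
  · field_simp at h
    linear_combination -h
  · field_simp
    linear_combination -h

theorem eventually_scaledY1_ne_zero (hcj : cj ≠ 0) : ∀ᶠ ε in 𝓝 0, scaledY1 cj bj p ε ≠ 0 :=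
  analyticAt_scaledY1.continuousAt.eventually_ne (by simpa using hcj)

theorem eventually_ne_zero_of_eq_scaledY1_div (hcj : cj ≠ 0)
    (hy1 : ∀ ε ≠ 0, y1 ε = scaledY1 cj bj p ε / ε ^ 2) : ∀ᶠ ε in 𝓝[≠] 0, y1 ε ≠ 0 := by
  filter_upwards [self_mem_nhdsWithin, nhdsWithin_le_nhds (eventually_scaledY1_ne_zero hcj)]
    with ε hε hP
  rw [hy1 ε hε]
  exact div_ne_zero hP (pow_ne_zero 2 hε)

theorem tendsto_inv_of_eq_scaledY1_div (hcj : cj ≠ 0)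
    (hy1 : ∀ ε ≠ 0, y1 ε = scaledY1 cj bj p ε / ε ^ 2) :
    Tendsto (fun ε => (y1 ε)⁻¹) (𝓝[≠] 0) (𝓝 0) := by
  have hε : Tendsto (fun ε : ℂ => ε) (𝓝[≠] 0) (𝓝 0) := nhdsWithin_le_nhds
  have hP : Tendsto (scaledY1 cj bj p) (𝓝[≠] 0) (𝓝 cj) := by
    simpa using analyticAt_scaledY1.continuousAt.tendsto.mono_left nhdsWithin_le_nhds
  simpa using ((hε.pow 2).div hP hcj).congr' (eventually_nhdsWithin_of_forall fun ε hε => by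
    rw [Pi.div_apply, hy1 ε hε, inv_div])

theorem of_aj1_ne_zero (hcj : cj ≠ 0) (ha : aj1 ≠ 0)
    (hy1 : ∀ ε ≠ 0, y1 ε = scaledY1 cj bj p ε / ε ^ 2)
    (hy2 : ∀ ε ≠ 0, y1 ε ≠ 0 → y2 ε = rhs aj1 bj1 cj1 (y1 ε) - ε)
    (hy3 : ∀ ε ≠ 0, y1 ε ≠ 0 → y2 ε ≠ 0 → y3 ε = rhs aj2 bj2 cj2 (y2 ε) - y1 ε) :
    (∀ᶠ ε in 𝓝[≠] 0, y2 ε ≠ 0) ∧ ¬∃ L, Tendsto y3 (𝓝[≠] 0) (𝓝 L) := by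
  have hy1_ne := eventually_ne_zero_of_eq_scaledY1_div hcj hy1
  have hu := tendsto_inv_of_eq_scaledY1_div hcj hy1
  have hy2_lim : Tendsto y2 (𝓝[≠] 0) (𝓝 aj1) := by
    have h := (((tendsto_const_nhds (x := aj1)).add (hu.const_mul bj1)).add
      ((hu.pow 2).const_mul cj1)).sub (nhdsWithin_le_nhds : Tendsto id (𝓝[≠] (0 : ℂ)) (𝓝 0))
    simp only [mul_zero, add_zero, sub_zero, ne_eq, OfNat.ofNat_ne_zero, not_false_eq_true,
      zero_pow] at h
    refine h.congr' ?_
    filter_upwards [self_mem_nhdsWithin, hy1_ne] with ε hε h1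
    rw [hy2 ε hε h1, rhs_eq_add_inv h1]
  have hy2_ne := hy2_lim.eventually_ne ha
  refine ⟨hy2_ne, fun ⟨L, hL⟩ => ?_⟩
  have hy1_lim : Tendsto y1 (𝓝[≠] 0) (𝓝 (rhs aj2 bj2 cj2 aj1 - L)) := by
    refine (((continuousAt_rhs ha).tendsto.comp hy2_lim).sub hL).congr' ?_
    filter_upwards [self_mem_nhdsWithin, hy1_ne, hy2_ne] with ε hε h1 h2
    rw [Function.comp_apply, hy3 ε hε h1 h2, sub_sub_cancel]
  have h1 : Tendsto (fun ε => y1 ε * (y1 ε)⁻¹) (𝓝[≠] 0) (𝓝 1) :=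
    tendsto_const_nhds.congr' (hy1_ne.mono fun ε h => (mul_inv_cancel₀ h).symm)
  exact one_ne_zero (tendsto_nhds_unique h1 (by simpa using hy1_lim.mul hu))

theorem of_aj1_eq_zero (hcj : cj ≠ 0)
    (hy1 : ∀ ε ≠ 0, y1 ε = scaledY1 cj bj p ε / ε ^ 2)
    (hy2 : ∀ ε ≠ 0, y1 ε ≠ 0 → y2 ε = rhs 0 bj1 cj1 (y1 ε) - ε)
    (hy3 : ∀ ε ≠ 0, y1 ε ≠ 0 → y2 ε ≠ 0 → y3 ε = rhs aj2 bj2 cj2 (y2 ε) - y1 ε) :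
    (∀ᶠ ε in 𝓝[≠] 0, y2 ε ≠ 0) ∧
      ((∃ L, Tendsto y3 (𝓝[≠] 0) (𝓝 L)) ↔ cj2 = cj ∧ bj2 - 2 * bj1 + bj = 0) := by
  have hw : ∀ᶠ ε in 𝓝 0, scaledY2 cj bj p bj1 cj1 ε ≠ 0 :=
    (analyticAt_scaledY2 hcj).continuousAt.eventually_ne (by simp)
  have hy2w : ∀ᶠ ε in 𝓝[≠] 0, ε ≠ 0 ∧ y1 ε ≠ 0 ∧ scaledY2 cj bj p bj1 cj1 ε ≠ 0 ∧
      y2 ε = ε * scaledY2 cj bj p bj1 cj1 ε := by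
    filter_upwards [self_mem_nhdsWithin, nhdsWithin_le_nhds (eventually_scaledY1_ne_zero hcj),
      eventually_ne_zero_of_eq_scaledY1_div hcj hy1, nhdsWithin_le_nhds hw] with ε hε hP h1 hwε
    exact ⟨hε, h1, hwε, by rw [hy2 ε hε h1, hy1 ε hε, rhs_sub_eq_mul_scaledY2 hε hP]⟩
  have hy2_ne : ∀ᶠ ε in 𝓝[≠] 0, y2 ε ≠ 0 :=
    hy2w.mono fun ε ⟨hε, _, hwε, h2⟩ => h2 ▸ mul_ne_zero hε hwε
  have hy3_eq : y3 =ᶠ[𝓝[≠] 0] fun ε => scaledY3 cj bj p bj1 cj1 aj2 bj2 cj2 ε / ε ^ 2 := by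
    filter_upwards [hy2w, hy2_ne] with ε ⟨hε, h1, hwε, h2⟩ h2_ne
    rw [hy3 ε hε h1 h2_ne, h2, hy1 ε hε, rhs_sub_eq_scaledY3_div hε hwε]
  exact ⟨hy2_ne, (exists_congr fun L => tendsto_congr' hy3_eq).trans
    (exists_tendsto_scaledY3_div_sq_iff hcj)⟩

end SingularityConfinement

/-- Singularity confinement calculation for `y_{n+1} + y_{n-1} = (a_n y_n² + b_n y_n + c_n)/y_n²`
with perturbed initial data `y_{j-1} = κ`, `y_j = ε`.  The iterates `y_{j+1}(ε)` and
`y_{j+2}(ε)` are nonzero for all sufficiently small `ε ≠ 0`, so `y_{j+3}(ε)` is well defined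
there, and `y_{j+3}(ε)` converges to a finite limit as `ε → 0` if and only if
`a_{j+1} = 0`, `c_{j+2} = c_j` and `b_{j+2} - 2 b_{j+1} + b_j = 0`. -/
theorem singularity_confinement
    (κ aj bj cj aj1 bj1 cj1 aj2 bj2 cj2 : ℂ) (hcj : cj ≠ 0)
    (y1 y2 y3 : ℂ → ℂ)
    (hy1 : ∀ ε : ℂ, ε ≠ 0 → y1 ε = (aj * ε ^ 2 + bj * ε + cj) / ε ^ 2 - κ)
    (hy2 : ∀ ε : ℂ, ε ≠ 0 → y1 ε ≠ 0 →
      y2 ε = (aj1 * (y1 ε) ^ 2 + bj1 * y1 ε + cj1) / (y1 ε) ^ 2 - ε)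
    (hy3 : ∀ ε : ℂ, ε ≠ 0 → y1 ε ≠ 0 → y2 ε ≠ 0 →
      y3 ε = (aj2 * (y2 ε) ^ 2 + bj2 * y2 ε + cj2) / (y2 ε) ^ 2 - y1 ε) :
    (∀ᶠ ε in 𝓝[≠] (0 : ℂ), y1 ε ≠ 0 ∧ y2 ε ≠ 0) ∧
      ((∃ L : ℂ, Tendsto y3 (𝓝[≠] (0 : ℂ)) (𝓝 L)) ↔
        (aj1 = 0 ∧ cj2 = cj ∧ bj2 - 2 * bj1 + bj = 0)) := by
  have hy1' : ∀ ε ≠ 0, y1 ε = SingularityConfinement.scaledY1 cj bj (aj - κ) ε / ε ^ 2 :=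
    fun ε hε => (hy1 ε hε).trans (SingularityConfinement.rhs_sub_eq_scaledY1_div hε)
  have hy1_ne := SingularityConfinement.eventually_ne_zero_of_eq_scaledY1_div hcj hy1'
  by_cases ha : aj1 = 0
  · subst ha
    obtain ⟨hy2_ne, hy3_lim⟩ := SingularityConfinement.of_aj1_eq_zero hcj hy1' hy2 hy3
    exact ⟨hy1_ne.and hy2_ne, hy3_lim.trans (and_iff_right rfl).symm⟩
  · obtain ⟨hy2_ne, hy3_lim⟩ := SingularityConfinement.of_aj1_ne_zero hcj ha hy1' hy2 hy3
    exact ⟨hy1_ne.and hy2_ne, iff_of_false hy3_lim fun h => ha h.1⟩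
end

section
/- Let y be a meromorphic function on ℂ, not identically zero, satisfying y(z+1) + y(z−1) = (a(z) y(z)² + b(z) y(z) + c(z))/y(z)² as an identity of meromorphic functions, where a, b, c are rational functions. Let ẑ ∈ ℂ be a point at which a, b, c are all analytic with c(ẑ) ≠ 0, and suppose y has a zero of order k ≥ 1 at ẑ. Then the function z ↦ y(z+1) has a pole of order at least 2k at ẑ, or the function z ↦ y(z−1) has a pole of order at least 2k at ẑ. -/
/-!
Near `ẑ` write `y` with a zero of order `k ≥ 1`. The numerator `a y² + b y + c` is then
meromorphic of order `0` at `ẑ`, since `c(ẑ) ≠ 0` while `a y²` and `b y` vanish there; dividing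
by `y²` gives order exactly `-2k` for the right-hand side. Two meromorphic functions that agree
off a countable set agree on a punctured neighbourhood (the complement of a countable set is
dense), so `y(z+1) + y(z-1)` also has order `-2k` at `ẑ`, and as the order of a sum is at least
the minimum of the orders, one of the two summands has order `≤ -2k`.
-/

/-- Two functions agree off some countable set; for meromorphic functions on `ℂ` this is
equality as meromorphic functions. -/
def EqOffCountable (f g : ℂ → ℂ) : Prop :=
  ∃ S : Set ℂ, S.Countable ∧ ∀ z ∉ S, f z = g z

open Classical in
/-- The order of a meromorphic function at a point: positive order `k` is a zero of order
`k`, negative order `-m` is a pole of order `m` (junk value `0` if `f` is not meromorphic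
at the point). -/
noncomputable def meroOrder (f : ℂ → ℂ) (z : ℂ) : WithTop ℤ :=
  if h : MeromorphicAt f z then meromorphicOrderAt f z else 0

open Filter Topology

variable {𝕜 : Type*} [NontriviallyNormedField 𝕜]

theorem Set.Countable.frequently_nhdsNE_notMem [CompleteSpace 𝕜] {S : Set 𝕜}
    (hS : S.Countable) (x : 𝕜) : ∃ᶠ z in 𝓝[≠] x, z ∉ S := by
  have hdense : Dense (insert x S)ᶜ := (hS.insert x).dense_compl 𝕜
  have hfreq := mem_closure_iff_frequently.mp (hdense.closure_eq ▸ Set.mem_univ x)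
  rw [frequently_nhdsWithin_iff]
  exact hfreq.mono fun z hz => by simp_all [Set.mem_insert_iff, not_or]

theorem MeromorphicAt.eventuallyEq_nhdsNE_of_eqOn_compl_countable [CompleteSpace 𝕜]
    {E : Type*} [NormedAddCommGroup E] [NormedSpace 𝕜 E] {f g : 𝕜 → E} {x : 𝕜}
    (hf : MeromorphicAt f x) (hg : MeromorphicAt g x) {S : Set 𝕜} (hS : S.Countable)
    (h : ∀ z ∉ S, f z = g z) : f =ᶠ[𝓝[≠] x] g :=
  (hf.frequently_eq_iff_eventuallyEq hg).mp ((hS.frequently_nhdsNE_notMem x).mono h)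

theorem RatFunc.analyticAt_eval (p : RatFunc 𝕜) {x : 𝕜} (hx : p.denom.eval x ≠ 0) :
    AnalyticAt 𝕜 (fun z => p.eval (RingHom.id 𝕜) z) x :=
  (AnalyticOnNhd.eval_polynomial p.num x trivial).div
    (AnalyticOnNhd.eval_polynomial p.denom x trivial) hx

theorem meromorphicOrderAt_le_or_le_of_add_le {E : Type*} [NormedAddCommGroup E]
    [NormedSpace 𝕜 E] {f g : 𝕜 → E} {x : 𝕜} (hf : MeromorphicAt f x)
    (hg : MeromorphicAt g x) {n : WithTop ℤ} (h : meromorphicOrderAt (f + g) x ≤ n) :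
    meromorphicOrderAt f x ≤ n ∨ meromorphicOrderAt g x ≤ n :=
  min_le_iff.mp ((meromorphicOrderAt_add hf hg).trans h)

theorem meromorphicOrderAt_quadratic_div_sq {A B C y : 𝕜 → 𝕜} {x : 𝕜}
    (hA : AnalyticAt 𝕜 A x) (hB : AnalyticAt 𝕜 B x) (hC : AnalyticAt 𝕜 C x) (hCx : C x ≠ 0)
    (hy : MeromorphicAt y x) {k : ℕ} (hk : 0 < k) (hyk : meromorphicOrderAt y x = (k : ℤ)) :
    meromorphicOrderAt (fun z => (A z * y z ^ 2 + B z * y z + C z) / y z ^ 2) x =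
      ((-(2 * (k : ℤ)) : ℤ) : WithTop ℤ) := by
  change meromorphicOrderAt ((A * y ^ 2 + B * y + C) / y ^ 2) x = _
  have hy2 : meromorphicOrderAt (y ^ 2) x = (2 * k : ℤ) := by
    rw [meromorphicOrderAt_pow hy, hyk]; norm_cast
  have hAy : 0 < meromorphicOrderAt (A * y ^ 2) x := by
    rw [meromorphicOrderAt_mul hA.meromorphicAt (hy.pow 2), hy2]
    exact (by exact_mod_cast (by omega) : (0 : WithTop ℤ) < (2 * k : ℤ)).trans_le
      (le_add_of_nonneg_left hA.meromorphicOrderAt_nonneg)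
  have hBy : 0 < meromorphicOrderAt (B * y) x := by
    rw [meromorphicOrderAt_mul hB.meromorphicAt hy, hyk]
    exact (by exact_mod_cast hk : (0 : WithTop ℤ) < (k : ℤ)).trans_le
      (le_add_of_nonneg_left hB.meromorphicOrderAt_nonneg)
  have hC0 : meromorphicOrderAt C x = 0 :=
    hC.meromorphicNFAt.meromorphicOrderAt_eq_zero_iff.mpr hCx
  have hN : meromorphicOrderAt (A * y ^ 2 + B * y + C) x = 0 := by
    have hlow : meromorphicOrderAt C x < meromorphicOrderAt (A * y ^ 2 + B * y) x :=
      hC0 ▸ (lt_min hAy hBy).trans_le (meromorphicOrderAt_add (by fun_prop) (by fun_prop))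
    rw [meromorphicOrderAt_add_eq_right_of_lt (by fun_prop) hlow, hC0]
  rw [meromorphicOrderAt_div (by fun_prop) (hy.pow 2), hN, hy2, zero_sub]
  rfl

theorem meroOrder_eq_meromorphicOrderAt {f : ℂ → ℂ} {x : ℂ} (hf : MeromorphicAt f x) :
    meroOrder f x = meromorphicOrderAt f x :=
  dif_pos hf

theorem zero_forces_neighbouring_pole_general
    (y : ℂ → ℂ) (hy : MeromorphicOn y Set.univ)
    (a b c : RatFunc ℂ)
    (heq : EqOffCountable (fun z => y (z + 1) + y (z - 1))
      (fun z => (a.eval (RingHom.id ℂ) z * y z ^ 2 + b.eval (RingHom.id ℂ) z * y z +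
        c.eval (RingHom.id ℂ) z) / y z ^ 2))
    (zhat : ℂ)
    (haz : a.denom.eval zhat ≠ 0) (hbz : b.denom.eval zhat ≠ 0)
    (hcz : c.denom.eval zhat ≠ 0) (hcval : c.eval (RingHom.id ℂ) zhat ≠ 0)
    (k : ℕ) (hk : 1 ≤ k) (hord : meroOrder y zhat = ((k : ℤ) : WithTop ℤ)) :
    meroOrder (fun z => y (z + 1)) zhat ≤ ((-(2 * (k : ℤ)) : ℤ) : WithTop ℤ) ∨
      meroOrder (fun z => y (z - 1)) zhat ≤ ((-(2 * (k : ℤ)) : ℤ) : WithTop ℤ) := by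
  have hyz : MeromorphicAt y zhat := hy zhat trivial
  have hy_add : MeromorphicAt (fun z => y (z + 1)) zhat :=
    meromorphicAt_fun_comp_add_const_iff_meromorphicAt.mpr (hy _ trivial)
  have hy_sub : MeromorphicAt (fun z => y (z - 1)) zhat :=
    meromorphicAt_fun_comp_sub_const_iff_meromorphicAt.mpr (hy _ trivial)
  have hA := a.analyticAt_eval haz
  have hB := b.analyticAt_eval hbz
  have hC := c.analyticAt_eval hcz
  rw [meroOrder_eq_meromorphicOrderAt hyz] at hord
  have hR := meromorphicOrderAt_quadratic_div_sq hA hB hC hcval hyz hk hord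
  obtain ⟨S, hS, hLR⟩ := heq
  have hL := (hy_add.add hy_sub).eventuallyEq_nhdsNE_of_eqOn_compl_countable
    (by fun_prop (disch := assumption)) hS hLR
  rw [meroOrder_eq_meromorphicOrderAt hy_add, meroOrder_eq_meromorphicOrderAt hy_sub]
  exact meromorphicOrderAt_le_or_le_of_add_le hy_add hy_sub
    ((meromorphicOrderAt_congr hL).trans hR).le

/-- If a meromorphic `y ≢ 0` solves `y(z+1) + y(z-1) = (a y² + b y + c)/y²` with rational
coefficients and has a zero of order `k ≥ 1` at a point `ẑ` where `a`, `b`, `c` are analytic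
and `c(ẑ) ≠ 0`, then `z ↦ y(z+1)` or `z ↦ y(z-1)` has a pole of order at least `2k` at `ẑ`. -/
theorem zero_forces_neighbouring_pole
    (y : ℂ → ℂ) (hy : MeromorphicOn y Set.univ)
    (hynz : ¬ EqOffCountable y (fun _ => 0))
    (a b c : RatFunc ℂ)
    (heq : EqOffCountable (fun z => y (z + 1) + y (z - 1))
      (fun z => (a.eval (RingHom.id ℂ) z * y z ^ 2 + b.eval (RingHom.id ℂ) z * y z +
        c.eval (RingHom.id ℂ) z) / y z ^ 2))
    (zhat : ℂ)
    (haz : a.denom.eval zhat ≠ 0) (hbz : b.denom.eval zhat ≠ 0)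
    (hcz : c.denom.eval zhat ≠ 0) (hcval : c.eval (RingHom.id ℂ) zhat ≠ 0)
    (k : ℕ) (hk : 1 ≤ k) (hord : meroOrder y zhat = ((k : ℤ) : WithTop ℤ)) :
    meroOrder (fun z => y (z + 1)) zhat ≤ ((-(2 * (k : ℤ)) : ℤ) : WithTop ℤ) ∨
      meroOrder (fun z => y (z - 1)) zhat ≤ ((-(2 * (k : ℤ)) : ℤ) : WithTop ℤ) :=
  zero_forces_neighbouring_pole_general y hy a b c heq zhat haz hbz hcz hcval k hk hord
end

section
/- Let b_j, b_{j+1}, b_{j+2}, c_j, c_{j+1}, c_{j+2} ∈ ℂ with c_j ≠ 0, and let y_{j−1}, y_j, y_{j+1}, y_{j+2}, y_{j+3} ∈ ℂ(z) be rational functions, none identically zero, satisfying y_{n+1} + y_{n−1} = (b_n y_n + c_n)/y_n² in ℂ(z) for n = j, j+1, j+2. Suppose y_j has a zero of order k ≥ 1 at a point z₀ ∈ ℂ and y_{j−1} has at z₀ either no pole or a pole of order strictly less than k. Then y_{j+1} has a pole of order exactly 2k at z₀, y_{j+2} has a zero of order exactly k at z₀, and if moreover c_{j+2} ≠ c_j,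 then y_{j+3} has a pole of order exactly 2k at z₀. -/
/-!
Write `f ~ a (z - z₀)^m` when `f = a (z - z₀)^m + O((z - z₀)^(m+1))`; such expansions
multiply, invert and add like leading terms. If `y_j ~ a (z - z₀)^k`, then `c_j ≠ 0`
dominates the numerator `b_j y_j + c_j` and `y_{j-1}` is too mild to interfere, so
`y_{j+1} ~ c_j a⁻² (z - z₀)^(-2k)`. Dividing by `y_{j+1}²` makes the next fraction
`O((z - z₀)^(2k))`, so `y_{j+2} ~ -a (z - z₀)^k`. Finally both `-y_{j+1}` and
`c_{j+2} / y_{j+2}²` have a pole of order `2k`, with leading coefficients adding up to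
`(c_{j+2} - c_j) a⁻²`.
-/

/-- The order of a nonzero rational function `f ∈ ℂ(z)` at a point `z₀`: the integer `m`
such that `f(z) = (z - z₀)^m g(z)` with `g` finite and nonzero at `z₀`.  A zero of order
`k` corresponds to `m = k > 0` and a pole of order `k` to `m = -k < 0`.  (For `f = 0` this
gives the junk value `0`.) -/
noncomputable def ratFuncOrder (f : RatFunc ℂ) (z₀ : ℂ) : ℤ :=
  (f.num.rootMultiplicity z₀ : ℤ) - (f.denom.rootMultiplicity z₀ : ℤ)

open Polynomial

theorem Polynomial.ne_zero_of_eval_ne_zero {R : Type*} [Semiring R] {p : R[X]} {x : R}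
    (h : p.eval x ≠ 0) : p ≠ 0 := by
  rintro rfl
  simp at h

section Expansion

variable {K : Type*} [Field K] {z₀ : K}

def IsRegularWithValue (z₀ : K) (r : RatFunc K) (a : K) : Prop :=
  ∃ p q : K[X], q.eval z₀ ≠ 0 ∧ p.eval z₀ = a * q.eval z₀ ∧
    r = algebraMap K[X] (RatFunc K) p / algebraMap K[X] (RatFunc K) q

namespace IsRegularWithValue

theorem of_polynomial (p : K[X]) :
    IsRegularWithValue z₀ (algebraMap K[X] (RatFunc K) p) (p.eval z₀) :=
  ⟨p, 1, by simp, by simp, by simp⟩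

theorem C (c : K) : IsRegularWithValue z₀ (RatFunc.C c) c := by
  simpa using of_polynomial (z₀ := z₀) (Polynomial.C c)

variable {r s : RatFunc K} {a b : K}

theorem add (hr : IsRegularWithValue z₀ r a) (hs : IsRegularWithValue z₀ s b) :
    IsRegularWithValue z₀ (r + s) (a + b) := by
  obtain ⟨p, q, hq, hpa, rfl⟩ := hr
  obtain ⟨p', q', hq', hpb, rfl⟩ := hs
  refine ⟨p * q' + q * p', q * q', by simp [hq, hq'],
    by simp only [eval_add, eval_mul, hpa, hpb]; ring, ?_⟩
  rw [div_add_div _ _ (RatFunc.algebraMap_ne_zero (ne_zero_of_eval_ne_zero hq))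
    (RatFunc.algebraMap_ne_zero (ne_zero_of_eval_ne_zero hq'))]
  simp only [map_add, map_mul]

theorem mul (hr : IsRegularWithValue z₀ r a) (hs : IsRegularWithValue z₀ s b) :
    IsRegularWithValue z₀ (r * s) (a * b) := by
  obtain ⟨p, q, hq, hpa, rfl⟩ := hr
  obtain ⟨p', q', hq', hpb, rfl⟩ := hs
  refine ⟨p * p', q * q', by simp [hq, hq'], by simp only [eval_mul, hpa, hpb]; ring, ?_⟩
  rw [div_mul_div_comm, map_mul, map_mul]

theorem neg (hr : IsRegularWithValue z₀ r a) : IsRegularWithValue z₀ (-r) (-a) := by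
  simpa using (C (z₀ := z₀) (-1)).mul hr

theorem inv (hr : IsRegularWithValue z₀ r a) (ha : a ≠ 0) :
    IsRegularWithValue z₀ r⁻¹ a⁻¹ := by
  obtain ⟨p, q, hq, hpa, rfl⟩ := hr
  exact ⟨q, p, by simp [hpa, ha, hq], by rw [hpa]; field_simp, by rw [inv_div]⟩

theorem pow (hr : IsRegularWithValue z₀ r a) (n : ℕ) :
    IsRegularWithValue z₀ (r ^ n) (a ^ n) := by
  induction n with
  | zero => simpa using C (z₀ := z₀) 1
  | succ n ih => simpa only [pow_succ] using ih.mul hr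

end IsRegularWithValue

/-- `f = a (z - z₀)^m + O((z - z₀)^(m+1))` near `z₀`; the coefficient `a` may vanish. -/
def HasExpansion (z₀ : K) (f : RatFunc K) (m : ℤ) (a : K) : Prop :=
  ∃ r, IsRegularWithValue z₀ r a ∧ f = algebraMap K[X] (RatFunc K) (X - C z₀) ^ m * r

theorem algebraMap_X_sub_C_ne_zero (z₀ : K) : algebraMap K[X] (RatFunc K) (X - C z₀) ≠ 0 :=
  RatFunc.algebraMap_ne_zero (X_sub_C_ne_zero z₀)

theorem hasExpansion_C (c : K) : HasExpansion z₀ (RatFunc.C c) 0 c :=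
  ⟨_, .C c, by simp⟩

namespace HasExpansion

variable {f g : RatFunc K} {m n : ℤ} {a b : K}

theorem add (hf : HasExpansion z₀ f m a) (hg : HasExpansion z₀ g m b) :
    HasExpansion z₀ (f + g) m (a + b) := by
  obtain ⟨r, hr, rfl⟩ := hf
  obtain ⟨s, hs, rfl⟩ := hg
  exact ⟨r + s, hr.add hs, by ring⟩

theorem neg (hf : HasExpansion z₀ f m a) : HasExpansion z₀ (-f) m (-a) := by
  obtain ⟨r, hr, rfl⟩ := hf
  exact ⟨-r, hr.neg, by ring⟩

theorem mul (hf : HasExpansion z₀ f m a) (hg : HasExpansion z₀ g n b) :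
    HasExpansion z₀ (f * g) (m + n) (a * b) := by
  obtain ⟨r, hr, rfl⟩ := hf
  obtain ⟨s, hs, rfl⟩ := hg
  refine ⟨r * s, hr.mul hs, ?_⟩
  rw [zpow_add₀ (algebraMap_X_sub_C_ne_zero z₀)]
  ring

theorem inv (hf : HasExpansion z₀ f m a) (ha : a ≠ 0) :
    HasExpansion z₀ f⁻¹ (-m) a⁻¹ := by
  obtain ⟨r, hr, rfl⟩ := hf
  exact ⟨r⁻¹, hr.inv ha, by rw [mul_inv, zpow_neg]⟩

theorem pow (hf : HasExpansion z₀ f m a) (k : ℕ) :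
    HasExpansion z₀ (f ^ k) (k * m) (a ^ k) := by
  obtain ⟨r, hr, rfl⟩ := hf
  exact ⟨r ^ k, hr.pow k, by rw [mul_pow, mul_comm (k : ℤ) m, zpow_mul, zpow_natCast]⟩

theorem of_lt (hf : HasExpansion z₀ f m a) (hnm : n < m) : HasExpansion z₀ f n 0 := by
  obtain ⟨r, hr, rfl⟩ := hf
  have hzero :=
    ((IsRegularWithValue.of_polynomial (z₀ := z₀) (X - C z₀)).pow (m - n).toNat).mul hr
  rw [eval_sub, eval_X, eval_C, sub_self, zero_pow (by omega), zero_mul] at hzero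
  refine ⟨_, hzero, ?_⟩
  rw [← mul_assoc, ← zpow_natCast, ← zpow_add₀ (algebraMap_X_sub_C_ne_zero z₀),
    Int.toNat_of_nonneg (by omega), add_sub_cancel]

end HasExpansion

end Expansion

section Recurrence

variable {K : Type*} [Field K] {z₀ : K} {b c : K} {yprev y ynext : RatFunc K}

theorem HasExpansion.next_of_zero {n : ℤ} {a d : K} (hy : HasExpansion z₀ y n a) (ha : a ≠ 0)
    (hn : 0 < n) (hprev : HasExpansion z₀ yprev (-(2 * n)) d)
    (heq : ynext + yprev = (RatFunc.C b * y + RatFunc.C c) / y ^ 2) :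
    HasExpansion z₀ ynext (-(2 * n)) (c / a ^ 2 - d) := by
  have hnum : HasExpansion z₀ (RatFunc.C b * y + RatFunc.C c) 0 c := by
    simpa using (((hasExpansion_C b).mul hy).of_lt (by omega)).add (hasExpansion_C c)
  have hfrac :
      HasExpansion z₀ ((RatFunc.C b * y + RatFunc.C c) / y ^ 2) (-(2 * n)) (c / a ^ 2) := by
    convert hnum.mul ((hy.pow 2).inv (pow_ne_zero 2 ha)) using 1 <;> push_cast <;> ring
  rw [eq_sub_of_add_eq heq, sub_eq_add_neg, sub_eq_add_neg]
  exact hfrac.add hprev.neg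

theorem HasExpansion.next_of_pole {m n : ℤ} {A a : K} (hy : HasExpansion z₀ y (-n) A)
    (hA : A ≠ 0) (hn : 0 < n) (hprev : HasExpansion z₀ yprev m a) (hmn : m < n)
    (heq : ynext + yprev = (RatFunc.C b * y + RatFunc.C c) / y ^ 2) :
    HasExpansion z₀ ynext m (-a) := by
  have hnum : HasExpansion z₀ (RatFunc.C b * y + RatFunc.C c) (-n) (b * A) := by
    simpa using ((hasExpansion_C b).mul hy).add ((hasExpansion_C c).of_lt (by omega))
  have hfrac := hnum.mul ((hy.pow 2).inv (pow_ne_zero 2 hA))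
  rw [eq_sub_of_add_eq heq, sub_eq_neg_add, div_eq_mul_inv]
  simpa only [add_zero] using hprev.neg.add (hfrac.of_lt (by push_cast; omega))

end Recurrence

theorem ratFuncOrder_algebraMap_div {p q : ℂ[X]} (hp : p ≠ 0) (hq : q ≠ 0) (z₀ : ℂ) :
    ratFuncOrder (algebraMap ℂ[X] (RatFunc ℂ) p / algebraMap ℂ[X] (RatFunc ℂ) q) z₀ =
      p.rootMultiplicity z₀ - q.rootMultiplicity z₀ := by
  set f := algebraMap ℂ[X] (RatFunc ℂ) p / algebraMap ℂ[X] (RatFunc ℂ) q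
  have hf : f ≠ 0 := div_ne_zero (RatFunc.algebraMap_ne_zero hp) (RatFunc.algebraMap_ne_zero hq)
  have hcross : f.num * q = p * f.denom := (RatFunc.num_mul_eq_mul_denom_iff hq).2 rfl
  have hmult := congrArg (rootMultiplicity z₀) hcross
  rw [rootMultiplicity_mul (mul_ne_zero (RatFunc.num_ne_zero hf) hq),
    rootMultiplicity_mul (mul_ne_zero hp (RatFunc.denom_ne_zero f))] at hmult
  unfold ratFuncOrder
  omega

theorem HasExpansion.ratFuncOrder_eq {z₀ : ℂ} {f : RatFunc ℂ} {m : ℤ} {a : ℂ}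
    (hf : HasExpansion z₀ f m a) (ha : a ≠ 0) : ratFuncOrder f z₀ = m := by
  obtain ⟨_, ⟨p, q, hq, hpa, rfl⟩, rfl⟩ := hf
  have hp : p.eval z₀ ≠ 0 := by rw [hpa]; exact mul_ne_zero ha hq
  have hpow : algebraMap ℂ[X] (RatFunc ℂ) (X - C z₀) ^ m =
      algebraMap ℂ[X] (RatFunc ℂ) ((X - C z₀) ^ m.toNat) /
        algebraMap ℂ[X] (RatFunc ℂ) ((X - C z₀) ^ (-m).toNat) := by
    conv_lhs => rw [← Int.toNat_sub_toNat_neg m]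
    rw [zpow_sub₀ (algebraMap_X_sub_C_ne_zero z₀), zpow_natCast, zpow_natCast, map_pow, map_pow]
  have hP (j : ℕ) : (X - C z₀) ^ j ≠ 0 := pow_ne_zero j (X_sub_C_ne_zero z₀)
  have hp0 := ne_zero_of_eval_ne_zero hp
  have hq0 := ne_zero_of_eval_ne_zero hq
  rw [hpow, div_mul_div_comm, ← map_mul, ← map_mul,
    ratFuncOrder_algebraMap_div (mul_ne_zero (hP _) hp0) (mul_ne_zero (hP _) hq0),
    rootMultiplicity_mul (mul_ne_zero (hP _) hp0), rootMultiplicity_mul (mul_ne_zero (hP _) hq0),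
    rootMultiplicity_X_sub_C_pow, rootMultiplicity_X_sub_C_pow,
    rootMultiplicity_eq_zero hp, rootMultiplicity_eq_zero hq]
  omega

theorem exists_hasExpansion_ratFuncOrder (z₀ : ℂ) {f : RatFunc ℂ} (hf : f ≠ 0) :
    ∃ a ≠ 0, HasExpansion z₀ f (ratFuncOrder f z₀) a := by
  set s := f.num.rootMultiplicity z₀
  set t := f.denom.rootMultiplicity z₀
  set p := f.num /ₘ (X - C z₀) ^ s
  set q := f.denom /ₘ (X - C z₀) ^ t
  have hp : p.eval z₀ ≠ 0 :=
    eval_divByMonic_pow_rootMultiplicity_ne_zero z₀ (RatFunc.num_ne_zero hf)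
  have hq : q.eval z₀ ≠ 0 :=
    eval_divByMonic_pow_rootMultiplicity_ne_zero z₀ (RatFunc.denom_ne_zero f)
  refine ⟨p.eval z₀ / q.eval z₀, div_ne_zero hp hq, _,
    ⟨p, q, hq, by field_simp, rfl⟩, ?_⟩
  have hnum : f.num = (X - C z₀) ^ s * p :=
    (pow_mul_divByMonic_rootMultiplicity_eq f.num z₀).symm
  have hden : f.denom = (X - C z₀) ^ t * q :=
    (pow_mul_divByMonic_rootMultiplicity_eq f.denom z₀).symm
  change f = _ ^ ((s : ℤ) - t) * _
  conv_lhs => rw [← RatFunc.num_div_denom f, hnum, hden]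
  rw [zpow_sub₀ (algebraMap_X_sub_C_ne_zero z₀), zpow_natCast, zpow_natCast]
  simp only [map_mul, map_pow]
  field_simp [algebraMap_X_sub_C_ne_zero z₀]

theorem rational_iterates_singularity_pattern_general
    (bj bj1 bj2 cj cj1 cj2 : ℂ) (hcj : cj ≠ 0)
    (yjm1 yj yjp1 yjp2 yjp3 : RatFunc ℂ)
    (h0 : yjm1 ≠ 0) (h1 : yj ≠ 0)
    (heq1 : yjp1 + yjm1 = (RatFunc.C bj * yj + RatFunc.C cj) / yj ^ 2)
    (heq2 : yjp2 + yj = (RatFunc.C bj1 * yjp1 + RatFunc.C cj1) / yjp1 ^ 2)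
    (heq3 : yjp3 + yjp1 = (RatFunc.C bj2 * yjp2 + RatFunc.C cj2) / yjp2 ^ 2)
    (k : ℕ) (hk : 1 ≤ k) (z₀ : ℂ)
    (hordj : ratFuncOrder yj z₀ = (k : ℤ))
    (hordjm1 : -(k : ℤ) < ratFuncOrder yjm1 z₀) :
    ratFuncOrder yjp1 z₀ = -(2 * (k : ℤ)) ∧
      ratFuncOrder yjp2 z₀ = (k : ℤ) ∧
      (cj2 ≠ cj → ratFuncOrder yjp3 z₀ = -(2 * (k : ℤ))) := by
  obtain ⟨a, ha, hyj⟩ := exists_hasExpansion_ratFuncOrder z₀ h1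
  obtain ⟨_, -, hyjm1⟩ := exists_hasExpansion_ratFuncOrder z₀ h0
  rw [hordj] at hyj
  have hk0 : (0 : ℤ) < k := by omega
  have hyjp1 := hyj.next_of_zero ha hk0 (hyjm1.of_lt (by omega)) heq1
  have hA : cj / a ^ 2 - 0 ≠ 0 := by simp [hcj, ha]
  have hyjp2 := hyjp1.next_of_pole hA (by omega) hyj (by omega) heq2
  have hyjp3 := hyjp2.next_of_zero (neg_ne_zero.2 ha) hk0 hyjp1 heq3
  refine ⟨hyjp1.ratFuncOrder_eq hA, hyjp2.ratFuncOrder_eq (neg_ne_zero.2 ha),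
    fun hne ↦ hyjp3.ratFuncOrder_eq ?_⟩
  rw [neg_sq, sub_zero, ← sub_div]
  exact div_ne_zero (sub_ne_zero.2 hne) (pow_ne_zero 2 ha)

/-- Singularity confinement for rational iterates of `y_{n+1} + y_{n-1} = (b_n y_n + c_n)/y_n²`:
if `y_j` has a zero of order `k ≥ 1` at `z₀` and `y_{j-1}` has at `z₀` either no pole or a
pole of order strictly less than `k`, then `y_{j+1}` has a pole of order exactly `2k` at `z₀`,
`y_{j+2}` has a zero of order exactly `k` at `z₀`, and if `c_{j+2} ≠ c_j` then `y_{j+3}`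
has a pole of order exactly `2k` at `z₀`. -/
theorem rational_iterates_singularity_pattern
    (bj bj1 bj2 cj cj1 cj2 : ℂ) (hcj : cj ≠ 0)
    (yjm1 yj yjp1 yjp2 yjp3 : RatFunc ℂ)
    (h0 : yjm1 ≠ 0) (h1 : yj ≠ 0) (h2 : yjp1 ≠ 0) (h3 : yjp2 ≠ 0) (h4 : yjp3 ≠ 0)
    (heq1 : yjp1 + yjm1 = (RatFunc.C bj * yj + RatFunc.C cj) / yj ^ 2)
    (heq2 : yjp2 + yj = (RatFunc.C bj1 * yjp1 + RatFunc.C cj1) / yjp1 ^ 2)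
    (heq3 : yjp3 + yjp1 = (RatFunc.C bj2 * yjp2 + RatFunc.C cj2) / yjp2 ^ 2)
    (k : ℕ) (hk : 1 ≤ k) (z₀ : ℂ)
    (hordj : ratFuncOrder yj z₀ = (k : ℤ))
    (hordjm1 : -(k : ℤ) < ratFuncOrder yjm1 z₀) :
    ratFuncOrder yjp1 z₀ = -(2 * (k : ℤ)) ∧
      ratFuncOrder yjp2 z₀ = (k : ℤ) ∧
      (cj2 ≠ cj → ratFuncOrder yjp3 z₀ = -(2 * (k : ℤ))) :=
  rational_iterates_singularity_pattern_general bj bj1 bj2 cj cj1 cj2 hcj yjm1 yj yjp1 yjp2 yjp3 h0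
    h1 heq1 heq2 heq3 k hk z₀ hordj hordjm1
end
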